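/- arXiv:1707.00639 — 2 statements merged into one kernel-verified Lean document; each statement's English description precedes it below -/
import Mathlib

section
/- A data-independent implementation 𝓘 (a data-independent set of executions) is linearizable w.r.t. a data-independent set S of sequential executions if and only if the set 𝓘_≠ of data-differentiated executions of 𝓘 is linearizable w.r.t. S_≠, the set of data-differentiated executions of S. -/
open Classical

universe u v w

/-- Operation symbols of the priority queue: `put(a,p)`, `rm(a)`, and `rm(empty)`
(the latter carrying a data-value argument for uniformity). -/
inductive PQOp (D : Type u) (P : Type v) : Type (max u v) where
  | put (a : D) (p : P)
  | rm (a : D)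
  | rmEmpty (a : D)

namespace PQOp
variable {D : Type u} {P : Type v}

/-- The data value of an operation symbol. -/
def val : PQOp D P → D
  | put a _ => a
  | rm a => a
  | rmEmpty a => a

/-- Renaming of the data values of an operation symbol (priorities unchanged). -/
def rename (r : D → D) : PQOp D P → PQOp D P
  | put a p => put (r a) p
  | rm a => rm (r a)
  | rmEmpty a => rmEmpty (r a)

end PQOp

/-- Call and return actions of a concurrent execution, carrying operation identifiers. -/
inductive PQEvent (O : Type w) (D : Type u) (P : Type v) : Type (max u v w) where
  | call (o : O) (m : PQOp D P)
  | ret (o : O) (m : PQOp D P)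

namespace PQEvent
variable {O : Type w} {D : Type u} {P : Type v}

/-- The operation identifier of an action. -/
def ident : PQEvent O D P → O
  | call o _ => o
  | ret o _ => o

/-- The method (with arguments) of an action. -/
def meth : PQEvent O D P → PQOp D P
  | call _ m => m
  | ret _ m => m

/-- The data value of an action. -/
def val (a : PQEvent O D P) : D := a.meth.val

/-- Renaming of the data values of an action (identifiers and priorities unchanged). -/
def rename (r : D → D) : PQEvent O D P → PQEvent O D P
  | call o m => call o (m.rename r)
  | ret o m => ret o (m.rename r)

end PQEvent

section PQ

variable {D : Type u} {P : Type v} {O : Type w} [PartialOrder P]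

/-- States of the priority-queue LTS: maps from priorities to finite sequences of values. -/
abbrev PQState (D : Type u) (P : Type v) := P → List D

/-- The initial state of the priority-queue LTS. -/
def pqInit (D : Type u) (P : Type v) : PQState D P := fun _ => []

/-- One transition of the priority-queue LTS. -/
def pqStep (q : PQState D P) : PQOp D P → PQState D P → Prop
  | PQOp.put a p, q' => q' p = a :: q p ∧ ∀ p', p' ≠ p → q' p' = q p'
  | PQOp.rm a, q' => ∃ p l, q p = l ++ [a] ∧ q' p = l ∧ (∀ p', p' ≠ p → q' p' = q p') ∧
      (∀ p', p' < p → q p' = [])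
  | PQOp.rmEmpty _, q' => q' = q ∧ ∀ p, q p = []

/-- Paths of the priority-queue LTS. -/
inductive pqReach : PQState D P → List (PQOp D P) → PQState D P → Prop where
  | nil (q : PQState D P) : pqReach q [] q
  | cons {q q' q'' : PQState D P} {op : PQOp D P} {l : List (PQOp D P)} :
      pqStep q op q' → pqReach q' l q'' → pqReach q (op :: l) q''

/-- `SeqPQ`: the set of traces of the priority-queue LTS. -/
def SeqPQ (e : List (PQOp D P)) : Prop := ∃ q, pqReach (pqInit D P) e q

/-- A sequential execution is data-differentiated if each value is put at most once. -/
def SeqDiff (e : List (PQOp D P)) : Prop :=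
  ∀ (i j : ℕ) a p p', e[i]? = some (PQOp.put a p) → e[j]? = some (PQOp.put a p') → i = j

/-- The priorities occurring in put operations of a sequential execution. -/
def prioritiesSeq (e : List (PQOp D P)) : Set P := {p | ∃ a, PQOp.put a p ∈ e}

/-- The priorities of unmatched put operations of a sequential execution. -/
def unmatchedPrioritiesSeq (e : List (PQOp D P)) : Set P :=
  {p | ∃ a, PQOp.put a p ∈ e ∧ PQOp.rm a ∉ e}

/-- Every put is matched by a remove. -/
def matchedSeq (e : List (PQOp D P)) : Prop :=
  ∀ a p, PQOp.put a p ∈ e → PQOp.rm a ∈ e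

/-- Every put with priority strictly below `p` is matched. -/
def matchedBelowSeq (e : List (PQOp D P)) (p : P) : Prop :=
  ∀ a q, PQOp.put a q ∈ e → q < p → PQOp.rm a ∈ e

def HasEmptyRemovesSeq (e : List (PQOp D P)) : Prop := ∃ d, PQOp.rmEmpty d ∈ e

def HasUnmatchedMaxPrioritySeq (e : List (PQOp D P)) : Prop :=
  ∃ p, p ∈ prioritiesSeq e ∧ (∀ q ∈ prioritiesSeq e, ¬ p < q) ∧
    p ∈ unmatchedPrioritiesSeq e

def UnmatchedMaxPrioritySeqP (e : List (PQOp D P)) (x : D) (p : P) : Prop :=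
  ∃ u v, e = u ++ PQOp.put x p :: v ∧
    (∀ q ∈ prioritiesSeq (u ++ v), ¬ p < q) ∧ p ∉ prioritiesSeq v

def UnmatchedMaxPrioritySeq (e : List (PQOp D P)) (x : D) : Prop :=
  ∃ p, UnmatchedMaxPrioritySeqP e x p

def MatchedMaxPrioritySeqP (e : List (PQOp D P)) (x : D) (p : P) : Prop :=
  ∃ u v w, e = u ++ PQOp.put x p :: (v ++ PQOp.rm x :: w) ∧
    (∀ q ∈ prioritiesSeq (u ++ v ++ w), ¬ p < q) ∧
    (∀ q ∈ unmatchedPrioritiesSeq (u ++ v ++ w), ¬ p ≤ q) ∧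
    matchedBelowSeq (u ++ v) p ∧ p ∉ prioritiesSeq (v ++ w)

def MatchedMaxPrioritySeq (e : List (PQOp D P)) (x : D) : Prop :=
  ∃ p, MatchedMaxPrioritySeqP e x p

/-- `MatchedMaxPriority^=`: additionally at least one value other than `x` has priority `p`. -/
def MatchedMaxPriorityEqSeq (e : List (PQOp D P)) (x : D) : Prop :=
  ∃ p, MatchedMaxPrioritySeqP e x p ∧ ∃ z, z ≠ x ∧ PQOp.put z p ∈ e

noncomputable def projSeqVals (Dset : Set D) (e : List (PQOp D P)) : List (PQOp D P) :=
  e.filter fun op => decide (op.val ∈ Dset)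

noncomputable def removeValSeq (x : D) (e : List (PQOp D P)) : List (PQOp D P) :=
  e.filter fun op => decide (op.val ≠ x)

/-- Projection of a sequential execution to a set of positions. -/
noncomputable def seqProjIdx (l : List (PQOp D P)) (I : Set ℕ) : List (PQOp D P) :=
  ((l.zipIdx.map Prod.swap).filter fun x => decide (x.1 ∈ I)).map Prod.snd

/-- The recursive procedure `Check-PQ-Seq`. -/
inductive CheckPQSeq : List (PQOp D P) → Prop where
  | nil : CheckPQSeq ([] : List (PQOp D P))
  | emptyRemove (u v : List (PQOp D P)) (d : D) :
      matchedSeq u → CheckPQSeq (u ++ v) →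
      CheckPQSeq (u ++ PQOp.rmEmpty d :: v)
  | unmatchedMax (e : List (PQOp D P)) (x : D) :
      ¬ HasEmptyRemovesSeq e → HasUnmatchedMaxPrioritySeq e →
      UnmatchedMaxPrioritySeq e x → CheckPQSeq (removeValSeq x e) → CheckPQSeq e
  | matchedMax (e : List (PQOp D P)) (x : D) :
      ¬ HasEmptyRemovesSeq e → ¬ HasUnmatchedMaxPrioritySeq e →
      MatchedMaxPrioritySeq e x → CheckPQSeq (removeValSeq x e) → CheckPQSeq e

/-- Well-formed (completed) executions. -/
def IsExec (e : List (PQEvent O D P)) : Prop :=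
  (∀ (i j : ℕ) o m m', e[i]? = some (PQEvent.call o m) → e[j]? = some (PQEvent.call o m') → i = j) ∧
  (∀ (i j : ℕ) o m m', e[i]? = some (PQEvent.ret o m) → e[j]? = some (PQEvent.ret o m') → i = j) ∧
  (∀ (j : ℕ) o m, e[j]? = some (PQEvent.ret o m) → ∃ i < j, e[i]? = some (PQEvent.call o m)) ∧
  (∀ (i : ℕ) o m, e[i]? = some (PQEvent.call o m) → ∃ j, i < j ∧ e[j]? = some (PQEvent.ret o m))

/-- The operations (identifiers) of an execution. -/
def opsOf (e : List (PQEvent O D P)) : Set O :=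
  {o | ∃ (i : ℕ) (m : PQOp D P), e[i]? = some (PQEvent.call o m)}

/-- Operation `o` has method (and arguments) `m` in `e`. -/
def hasMethod (e : List (PQEvent O D P)) (o : O) (m : PQOp D P) : Prop :=
  ∃ i : ℕ, e[i]? = some (PQEvent.call o m)

/-- Happens-before: the return of `o1` occurs before the call of `o2`. -/
def hb (e : List (PQEvent O D P)) (o1 o2 : O) : Prop :=
  ∃ (i j : ℕ) (m1 m2 : PQOp D P), i < j ∧ e[i]? = some (PQEvent.ret o1 m1) ∧ e[j]? = some (PQEvent.call o2 m2)

/-- `f` witnesses that the sequential execution `l` is a linearization of `e`. -/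
def IsLin (e : List (PQEvent O D P)) (l : List (PQOp D P)) (f : O → ℕ) : Prop :=
  Set.BijOn f (opsOf e) {i | i < l.length} ∧
  (∀ o m, hasMethod e o m → l[f o]? = some m) ∧
  (∀ o1 o2, hb e o1 o2 → f o1 < f o2)

/-- `e ⊑ l`: `e` is linearizable w.r.t. the sequential execution `l`. -/
def LinTo (e : List (PQEvent O D P)) (l : List (PQOp D P)) : Prop := ∃ f, IsLin e l f

/-- A concurrent execution is data-differentiated if each value is put at most once. -/
def ExecDiff (e : List (PQEvent O D P)) : Prop :=
  ∀ (i j : ℕ) o o' a p p', e[i]? = some (PQEvent.call o (PQOp.put a p)) →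
    e[j]? = some (PQEvent.call o' (PQOp.put a p')) → i = j

/-- Projection of an execution to a set of data values. -/
noncomputable def projVals (Dset : Set D) (e : List (PQEvent O D P)) : List (PQEvent O D P) :=
  e.filter fun a => decide (a.val ∈ Dset)

/-- `e ∖ x`. -/
noncomputable def removeValE (x : D) (e : List (PQEvent O D P)) : List (PQEvent O D P) :=
  e.filter fun a => decide (a.val ≠ x)

/-- `e ∖ o` for an operation identifier `o`. -/
noncomputable def removeIdE (o : O) (e : List (PQEvent O D P)) : List (PQEvent O D P) :=
  e.filter fun a => decide (a.ident ≠ o)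

/-- Projection of an execution to a set of operations. -/
noncomputable def projIds (S : Set O) (e : List (PQEvent O D P)) : List (PQEvent O D P) :=
  e.filter fun a => decide (a.ident ∈ S)

def putOccurs (e : List (PQEvent O D P)) (a : D) (p : P) : Prop :=
  ∃ o, hasMethod e o (PQOp.put a p)

def rmOccurs (e : List (PQEvent O D P)) (a : D) : Prop :=
  ∃ o, hasMethod e o (PQOp.rm a)

def prioritiesE (e : List (PQEvent O D P)) : Set P := {p | ∃ a, putOccurs e a p}

def HasEmptyRemovesE (e : List (PQEvent O D P)) : Prop :=
  ∃ o d, hasMethod e o (PQOp.rmEmpty d)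

def HasUnmatchedMaxPriorityE (e : List (PQEvent O D P)) : Prop :=
  ∃ p, p ∈ prioritiesE e ∧ (∀ q ∈ prioritiesE e, ¬ p < q) ∧
    ∃ a, putOccurs e a p ∧ ¬ rmOccurs e a

def HasMatchedMaxPriorityE (e : List (PQEvent O D P)) : Prop :=
  ¬ HasEmptyRemovesE e ∧ ¬ HasUnmatchedMaxPriorityE e

/-- `EmptyRemove-Conc(e,o)`: some linearization of `e` places the `rm(empty)` operation `o`
after a matched prefix. -/
def EmptyRemoveConc (e : List (PQEvent O D P)) (o : O) : Prop :=
  ∃ l f, IsLin e l f ∧ (∃ d, hasMethod e o (PQOp.rmEmpty d)) ∧ matchedSeq (l.take (f o))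

def UnmatchedMaxPriorityConc (e : List (PQEvent O D P)) (x : D) : Prop :=
  ∃ l, LinTo e l ∧ UnmatchedMaxPrioritySeq l x

def MatchedMaxPriorityConc (e : List (PQEvent O D P)) (x : D) : Prop :=
  ∃ l, LinTo e l ∧ MatchedMaxPrioritySeq l x

def MatchedMaxPriorityEqConc (e : List (PQEvent O D P)) (x : D) : Prop :=
  ∃ l, LinTo e l ∧ MatchedMaxPriorityEqSeq l x

/-- The recursive procedure `Check-PQ-Conc`. -/
inductive CheckPQConc : List (PQEvent O D P) → Prop where
  | nil : CheckPQConc ([] : List (PQEvent O D P))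
  | emptyRemove (e : List (PQEvent O D P)) (o : O) :
      HasEmptyRemovesE e → EmptyRemoveConc e o →
      CheckPQConc (removeIdE o e) → CheckPQConc e
  | unmatchedMax (e : List (PQEvent O D P)) (x : D) :
      ¬ HasEmptyRemovesE e → HasUnmatchedMaxPriorityE e →
      UnmatchedMaxPriorityConc e x → CheckPQConc (removeValE x e) → CheckPQConc e
  | matchedMax (e : List (PQEvent O D P)) (x : D) :
      ¬ HasEmptyRemovesE e → ¬ HasUnmatchedMaxPriorityE e →
      MatchedMaxPriorityConc e x → CheckPQConc (removeValE x e) → CheckPQConc e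

/-- The procedure `Check-PQ-Conc-NonRec`: `Check-PQ-Conc` with recursive calls replaced
by `true`. -/
def CheckPQConcNR (e : List (PQEvent O D P)) : Prop :=
  e = [] ∨
  (HasEmptyRemovesE e ∧ ∃ o, EmptyRemoveConc e o) ∨
  (¬ HasEmptyRemovesE e ∧ HasUnmatchedMaxPriorityE e ∧ ∃ x, UnmatchedMaxPriorityConc e x) ∨
  (¬ HasEmptyRemovesE e ∧ ¬ HasUnmatchedMaxPriorityE e ∧ ∃ x, MatchedMaxPriorityConc e x)

def isPutOf (e : List (PQEvent O D P)) (o : O) (a : D) : Prop :=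
  ∃ p, hasMethod e o (PQOp.put a p)

def isRmOf (e : List (PQEvent O D P)) (o : O) (a : D) : Prop :=
  hasMethod e o (PQOp.rm a)

def opValIs (e : List (PQEvent O D P)) (o : O) (a : D) : Prop :=
  isPutOf e o a ∨ isRmOf e o a

def putPutHB (e : List (PQEvent O D P)) (a b : D) : Prop :=
  ∃ o1 o2, isPutOf e o1 a ∧ isPutOf e o2 b ∧ hb e o1 o2

def putRmHB (e : List (PQEvent O D P)) (a b : D) : Prop :=
  ∃ o1 o2, isPutOf e o1 a ∧ isRmOf e o2 b ∧ hb e o1 o2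

def rmRmHB (e : List (PQEvent O D P)) (a b : D) : Prop :=
  ∃ o1 o2, isRmOf e o1 a ∧ isRmOf e o2 b ∧ hb e o1 o2

def rmPutHB (e : List (PQEvent O D P)) (a b : D) : Prop :=
  ∃ o1 o2, isRmOf e o1 a ∧ isPutOf e o2 b ∧ hb e o1 o2

/-- The values occurring in an execution. -/
def valuesOfE (e : List (PQEvent O D P)) : Set D := {a | ∃ o, opValIs e o a}

/-- The left-right constraint of `x`: edges of the graph `G`. -/
def lrEdge (e : List (PQEvent O D P)) (x : D) (d1 d2 : D) : Prop :=
  d1 ∈ valuesOfE e ∧ d2 ∈ valuesOfE e ∧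
  ((d2 = x ∧ (putPutHB e d1 x ∨ putRmHB e d1 x)) ∨
   (d1 = x ∧ (rmRmHB e x d2 ∨ ¬ rmOccurs e d2)) ∨
   putRmHB e d1 d2)

/-- `p` is the unique maximal priority occurring in `e`. -/
def UniqueMaxPriorityE (e : List (PQEvent O D P)) (p : P) : Prop :=
  p ∈ prioritiesE e ∧ ∀ q ∈ prioritiesE e, q ≠ p → q < p

/-- The values added with priority `q` in `e`. -/
def valsOfPri (e : List (PQEvent O D P)) (q : P) : Set D := {a | putOccurs e a q}

/-- For each priority, the projection of `e` to the values of that priority is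
linearizable w.r.t. `SeqPQ`. -/
def SinglePriLin (e : List (PQEvent O D P)) : Prop :=
  ∀ q : P, ∃ l, SeqPQ l ∧ LinTo (projVals (valsOfPri e q) e) l

def callPutAt (e : List (PQEvent O D P)) (a : D) (p : P) (i : ℕ) : Prop :=
  ∃ o, e[i]? = some (PQEvent.call o (PQOp.put a p))

def retPutAt (e : List (PQEvent O D P)) (a : D) (i : ℕ) : Prop :=
  ∃ o p, e[i]? = some (PQEvent.ret o (PQOp.put a p))

def callRmAt (e : List (PQEvent O D P)) (a : D) (i : ℕ) : Prop :=
  ∃ o, e[i]? = some (PQEvent.call o (PQOp.rm a))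

def retRmAt (e : List (PQEvent O D P)) (a : D) (i : ℕ) : Prop :=
  ∃ o, e[i]? = some (PQEvent.ret o (PQOp.rm a))

/-- Index `i` lies in the interval of value `z`: from `ret(put,z,_)` to `call(rm,z)`,
or to the last index of `e` if `rm(z)` is absent. -/
def InInterval (e : List (PQEvent O D P)) (z : D) (i : ℕ) : Prop :=
  ∃ j, retPutAt e z j ∧ j ≤ i ∧
    ((∃ k, callRmAt e z k ∧ i ≤ k) ∨ (¬ rmOccurs e z ∧ i ≤ e.length - 1))

/-- Gap-points of a value `x` of priority `p`. -/
def GapPoint (e : List (PQEvent O D P)) (x : D) (p : P) (i : ℕ) : Prop :=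
  i < e.length ∧
  (∃ j, callPutAt e x p j ∧ j ≤ i) ∧
  (∃ j, callRmAt e x j ∧ j ≤ i) ∧
  (∃ j, retRmAt e x j ∧ i < j) ∧
  ∀ z q, putOccurs e z q → q < p → ¬ InInterval e z i

def pbA (e : List (PQEvent O D P)) (a b : D) : Prop := putPutHB e a b
def pbB (e : List (PQEvent O D P)) (a b : D) : Prop := rmRmHB e a b
def pbC (e : List (PQEvent O D P)) (a b : D) : Prop := rmPutHB e a b
def pb (e : List (PQEvent O D P)) (a b : D) : Prop := pbA e a b ∨ pbB e a b ∨ pbC e a b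
def pbStar (e : List (PQEvent O D P)) : D → D → Prop := Relation.TransGen (pb e)

/-- The levels `UVSet_i(e,x)` (indexed from 0). -/
def UVSetN (e : List (PQEvent O D P)) (x : D) : ℕ → Set O
  | 0 => {o | ∃ a, a ≠ x ∧ opValIs e o a ∧ ∃ o', opValIs e o' a ∧
        ∃ ox, (isPutOf e ox x ∨ isRmOf e ox x) ∧ hb e o' ox}
  | n + 1 => {o | (∀ k, k ≤ n → o ∉ UVSetN e x k) ∧
        ∃ a, opValIs e o a ∧ ∃ o', opValIs e o' a ∧
          ∃ o'', o'' ∈ UVSetN e x n ∧ hb e o' o''}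
  termination_by n => n
  decreasing_by all_goals omega

def UVSet (e : List (PQEvent O D P)) (x : D) : Set O := ⋃ n, UVSetN e x n

/-- Data independence of a set of sequential executions. -/
def DataIndepSeqSet (S : Set (List (PQOp D P))) : Prop :=
  (∀ e ∈ S, ∃ e' ∈ S, SeqDiff e' ∧ ∃ r : D → D, e = e'.map (PQOp.rename r)) ∧
  (∀ e ∈ S, ∀ r : D → D, e.map (PQOp.rename r) ∈ S)

/-- Data independence of a set of (concurrent) executions. -/
def DataIndepExecSet (E : Set (List (PQEvent O D P))) : Prop :=
  (∀ e ∈ E, ∃ e' ∈ E, ExecDiff e' ∧ ∃ r : D → D, e = e'.map (PQEvent.rename r)) ∧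
  (∀ e ∈ E, ∀ r : D → D, e.map (PQEvent.rename r) ∈ E)

/-- `e|⪯p`: projection of `e` to the values whose priority is `⪯ p`. -/
noncomputable def projLE (e : List (PQEvent O D P)) (p : P) : List (PQEvent O D P) :=
  projVals {a | ∃ q, putOccurs e a q ∧ q ≤ p} e

/-- `e` is `UnmatchedMaxPriority`-linearizable. -/
def UnmatchedLin (e : List (PQEvent O D P)) : Prop :=
  HasUnmatchedMaxPriorityE e → ∃ x, UnmatchedMaxPriorityConc e x

/-- `e` is `MatchedMaxPriority`-linearizable. -/
def MatchedLin (e : List (PQEvent O D P)) : Prop :=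
  HasMatchedMaxPriorityE e → ∃ x, MatchedMaxPriorityConc e x

def comparablePri (p q : P) : Prop := p ≤ q ∨ q ≤ p

/-- The operation symbol `op` is on a value whose priority (in `l`) is comparable with `p`. -/
def opComparable (l : List (PQOp D P)) (p : P) (op : PQOp D P) : Prop :=
  ∃ q, PQOp.put op.val q ∈ l ∧ comparablePri p q

/-- `op` is a put with priority `p`. -/
def isPutPri (p : P) (op : PQOp D P) : Prop := ∃ a, op = PQOp.put a p

/- Auxiliary lemmas for renaming. -/

lemma hasMethod_map_of (r : D → D) {e : List (PQEvent O D P)} {o : O} {m : PQOp D P}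
    (h : hasMethod e o m) : hasMethod (e.map (PQEvent.rename r)) o (m.rename r) := by
  obtain ⟨i, hi⟩ := h
  exact ⟨i, by simp [List.getElem?_map, hi, PQEvent.rename]⟩

lemma hasMethod_of_map (r : D → D) {e : List (PQEvent O D P)} {o : O} {m : PQOp D P}
    (h : hasMethod (e.map (PQEvent.rename r)) o m) :
    ∃ m', m = m'.rename r ∧ hasMethod e o m' := by
  obtain ⟨i, hi⟩ := h
  rw [List.getElem?_map] at hi
  cases he : e[i]? with
  | none => simp [he] at hi
  | some a =>
    rw [he] at hi
    cases a with
    | call o' m' =>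
      simp only [Option.map_some, PQEvent.rename, Option.some.injEq,
        PQEvent.call.injEq] at hi
      exact ⟨m', hi.2.symm, i, by rw [he, hi.1]⟩
    | ret o' m' =>
      simp [PQEvent.rename] at hi

lemma opsOf_map (r : D → D) (e : List (PQEvent O D P)) :
    opsOf (e.map (PQEvent.rename r)) = opsOf e := by
  ext o
  constructor
  · rintro ⟨i, m, hi⟩
    obtain ⟨m', _, i', hi'⟩ := hasMethod_of_map r ⟨i, hi⟩
    exact ⟨i', m', hi'⟩
  · rintro ⟨i, m, hi⟩
    obtain ⟨i', hi'⟩ := hasMethod_map_of r ⟨i, hi⟩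
    exact ⟨i', m.rename r, hi'⟩

lemma hb_of_map (r : D → D) {e : List (PQEvent O D P)} {o1 o2 : O}
    (h : hb (e.map (PQEvent.rename r)) o1 o2) : hb e o1 o2 := by
  obtain ⟨i, j, m1, m2, hij, hi, hj⟩ := h
  rw [List.getElem?_map] at hi hj
  cases hei : e[i]? with
  | none => simp [hei] at hi
  | some a =>
    cases hej : e[j]? with
    | none => simp [hej] at hj
    | some b =>
      rw [hei] at hi; rw [hej] at hj
      cases a with
      | call o' m' => simp [PQEvent.rename] at hi
      | ret o' m' =>
        cases b with
        | ret o'' m'' => simp [PQEvent.rename] at hj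
        | call o'' m'' =>
          simp only [Option.map_some, PQEvent.rename, Option.some.injEq,
            PQEvent.ret.injEq, PQEvent.call.injEq] at hi hj
          exact ⟨i, j, m', m'', hij, by rw [hei, hi.1], by rw [hej, hj.1]⟩

lemma IsLin_map (r : D → D) {e : List (PQEvent O D P)} {l : List (PQOp D P)} {f : O → ℕ}
    (h : IsLin e l f) : IsLin (e.map (PQEvent.rename r)) (l.map (PQOp.rename r)) f := by
  obtain ⟨hbij, hmeth, hhb⟩ := h
  refine ⟨?_, ?_, ?_⟩
  · rw [opsOf_map]
    simpa [List.length_map] using hbij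
  · intro o m hm
    obtain ⟨m', rfl, hm'⟩ := hasMethod_of_map r hm
    have := hmeth o m' hm'
    simp [List.getElem?_map, this]
  · intro o1 o2 hhb'
    exact hhb o1 o2 (hb_of_map r hhb')

end PQ

/-- a data-independent implementation `I` is linearizable w.r.t. a
data-independent set `S` of sequential executions iff the data-differentiated executions
of `I` are linearizable w.r.t. the data-differentiated executions of `S`. -/
theorem dataIndependent_linearizable_iff_differentiated
    {D : Type u} {P : Type v} {O : Type w} [PartialOrder P]
    (I : Set (List (PQEvent O D P))) (S : Set (List (PQOp D P)))
    (hexec : ∀ e ∈ I, IsExec e)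
    (hI : DataIndepExecSet I) (hS : DataIndepSeqSet S) :
    (∀ e ∈ I, ∃ l ∈ S, LinTo e l) ↔
      (∀ e ∈ I, ExecDiff e → ∃ l ∈ S, SeqDiff l ∧ LinTo e l) := by
  constructor
  · -- forward: a linearization of a differentiated execution is differentiated
    intro h e he hdiff
    obtain ⟨l, hlS, f, hlin⟩ := h e he
    refine ⟨l, hlS, ?_, f, hlin⟩
    obtain ⟨hbij, hmeth, _⟩ := hlin
    intro i j a p p' hi hj
    have hi' : i < l.length := by
      by_contra hc
      push_neg at hc
      rw [List.getElem?_eq_none hc] at hi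
      simp at hi
    have hj' : j < l.length := by
      by_contra hc
      push_neg at hc
      rw [List.getElem?_eq_none hc] at hj
      simp at hj
    obtain ⟨o1, ho1, rfl⟩ := hbij.surjOn hi'
    obtain ⟨o2, ho2, rfl⟩ := hbij.surjOn hj'
    obtain ⟨k1, m1, hc1⟩ := ho1
    obtain ⟨k2, m2, hc2⟩ := ho2
    have hm1 : l[f o1]? = some m1 := hmeth o1 m1 ⟨k1, hc1⟩
    have hm2 : l[f o2]? = some m2 := hmeth o2 m2 ⟨k2, hc2⟩
    rw [hi] at hm1; rw [hj] at hm2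
    have e1 : m1 = PQOp.put a p := (Option.some.injEq _ _ ▸ hm1).symm
    have e2 : m2 = PQOp.put a p' := (Option.some.injEq _ _ ▸ hm2).symm
    subst e1; subst e2
    have hk : k1 = k2 := hdiff k1 k2 o1 o2 a p p' hc1 hc2
    subst hk
    rw [hc1] at hc2
    have : o1 = o2 := by
      injection hc2 with h'
      injection h' with h1 _
    rw [this]
  · -- backward: rename from a differentiated representative
    intro h e he
    obtain ⟨e', he', hdiff', r, hre⟩ := hI.1 e he
    obtain ⟨l, hlS, _, f, hlin⟩ := h e' he' hdiff'
    refine ⟨l.map (PQOp.rename r), hS.2 l hlS r, f, ?_⟩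
    rw [hre]
    exact IsLin_map r hlin
end

section
/- Let l ∈ SeqPQ be a data-differentiated sequential execution containing no rm(empty), and let p be a maximal priority of l. Let l' be obtained from l by discarding, from some position of l onward, all operations whose value's priority is incomparable with p. Then l' ∈ SeqPQ. -/
open Classical

universe u v w

section Aux

variable {D : Type u} {P : Type v} [PartialOrder P]

private lemma pqReach_append {q q' q'' : PQState D P} {l1 l2 : List (PQOp D P)}
    (h1 : pqReach q l1 q') (h2 : pqReach q' l2 q'') : pqReach q (l1 ++ l2) q'' := by
  induction h1 with
  | nil => simpa using h2
  | cons hstep _ ih => exact pqReach.cons hstep (ih h2)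

private lemma pqReach_split {q q'' : PQState D P} {l1 l2 : List (PQOp D P)}
    (h : pqReach q (l1 ++ l2) q'') : ∃ q', pqReach q l1 q' ∧ pqReach q' l2 q'' := by
  induction l1 generalizing q with
  | nil => exact ⟨q, pqReach.nil q, by simpa using h⟩
  | cons op t ih =>
    rcases h with _ | @⟨_, q1, _, _, _, hstep, hrest⟩
    obtain ⟨qm, h1, h2⟩ := ih hrest
    exact ⟨qm, pqReach.cons hstep h1, h2⟩

private lemma pqReach_mem {q q' : PQState D P} {ops : List (PQOp D P)}
    (h : pqReach q ops q') :
    ∀ r a, a ∈ q' r → a ∈ q r ∨ PQOp.put a r ∈ ops := by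
  induction h with
  | nil => exact fun r a ha => Or.inl ha
  | @cons q q1 q2 op rest hstep _ ih =>
    intro r a ha
    rcases ih r a ha with ha1 | hrest
    · cases op with
      | put b s =>
        obtain ⟨h1, h2⟩ := hstep
        by_cases hr : r = s
        · subst hr
          rw [h1] at ha1
          rcases List.mem_cons.1 ha1 with h | h
          · subst h; exact Or.inr List.mem_cons_self
          · exact Or.inl h
        · rw [h2 r hr] at ha1; exact Or.inl ha1
      | rm b =>
        obtain ⟨s, ll, hq, hq1, hoth, _⟩ := hstep
        by_cases hr : r = s
        · subst hr
          rw [hq1] at ha1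
          exact Or.inl (hq ▸ List.mem_append_left _ ha1)
        · rw [hoth r hr] at ha1; exact Or.inl ha1
      | rmEmpty b =>
        obtain ⟨h1, _⟩ := hstep
        rw [h1] at ha1; exact Or.inl ha1
    · exact Or.inr (List.mem_cons_of_mem _ hrest)

private lemma put_pri_unique {l : List (PQOp D P)} (hd : SeqDiff l) {a : D} {r r' : P}
    (h1 : PQOp.put a r ∈ l) (h2 : PQOp.put a r' ∈ l) : r = r' := by
  obtain ⟨i, hi⟩ := List.mem_iff_getElem?.1 h1
  obtain ⟨j, hj⟩ := List.mem_iff_getElem?.1 h2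
  have hij := hd i j a r r' hi hj
  subst hij
  rw [hi] at hj
  simpa using hj

/-- Key simulation lemma: the filtered suffix can be executed from any shadow state
agreeing with the real state on priorities `≤ p`. -/
private lemma sim_filter (l : List (PQOp D P)) (hd : SeqDiff l)
    (hne : ¬ HasEmptyRemovesSeq l) (p : P)
    (hmax : ∀ q ∈ prioritiesSeq l, ¬ p < q) :
    ∀ (ops : List (PQOp D P)) (q qf qs : PQState D P), pqReach q ops qf →
      (∀ op ∈ ops, op ∈ l) →
      (∀ r a, a ∈ q r → PQOp.put a r ∈ l) →
      (∀ r a, a ∈ qs r → PQOp.put a r ∈ l) →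
      (∀ r, r ≤ p → qs r = q r) →
      ∃ qf', pqReach qs (ops.filter fun op => decide (opComparable l p op)) qf' := by
  intro ops q qf qs hreach
  induction hreach generalizing qs with
  | nil => exact fun _ _ _ _ => ⟨qs, pqReach.nil qs⟩
  | @cons q q1 q2 op rest hstep hrest ih =>
    intro hsub hmemq hmemqs hagree
    have hopl : op ∈ l := hsub op List.mem_cons_self
    have hsub' : ∀ op' ∈ rest, op' ∈ l := fun op' h => hsub op' (List.mem_cons_of_mem _ h)
    -- comparable priorities of puts in l are ≤ p
    have hlep : ∀ (b : D) (s : P), PQOp.put b s ∈ l → comparablePri p s → s ≤ p := by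
      intro b s hbs hc
      rcases hc with hps | hsp
      · rcases lt_or_eq_of_le hps with hlt | heq
        · exact absurd hlt (hmax s ⟨b, hbs⟩)
        · exact heq.symm.le
      · exact hsp
    cases op with
    | put b s =>
      obtain ⟨h1, h2⟩ := hstep
      have hbl : PQOp.put b s ∈ l := hopl
      have hmemq1 : ∀ r a, a ∈ q1 r → PQOp.put a r ∈ l := by
        intro r a ha
        by_cases hr : r = s
        · subst hr; rw [h1] at ha
          rcases List.mem_cons.1 ha with h | h
          · subst h; exact hbl
          · exact hmemq _ _ h
        · exact hmemq _ _ (by rw [h2 r hr] at ha; exact ha)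
      by_cases hcmp : opComparable l p (PQOp.put b s)
      · -- kept
        obtain ⟨s', hbs', hc⟩ := hcmp
        have hss' : s = s' := put_pri_unique hd hbl hbs'
        subst hss'
        have hsp : s ≤ p := hlep b s hbl hc
        set qs1 : PQState D P := fun r => if r = s then b :: qs r else qs r with hqs1
        have hstep' : pqStep qs (PQOp.put b s) qs1 :=
          ⟨by simp [hqs1], fun r hr => by simp [hqs1, hr]⟩
        have hmemqs1 : ∀ r a, a ∈ qs1 r → PQOp.put a r ∈ l := by
          intro r a ha
          by_cases hr : r = s
          · subst hr; simp only [hqs1, if_pos rfl] at ha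
            rcases List.mem_cons.1 ha with h | h
            · subst h; exact hbl
            · exact hmemqs _ _ h
          · exact hmemqs _ _ (by simpa [hqs1, hr] using ha)
        have hagree1 : ∀ r, r ≤ p → qs1 r = q1 r := by
          intro r hr
          by_cases hrs : r = s
          · subst hrs; simp only [hqs1, if_pos rfl]
            rw [h1, hagree r hr]
          · simp only [hqs1, if_neg hrs]
            rw [h2 r hrs, hagree r hr]
        obtain ⟨qf', hf⟩ := ih qs1 hsub' hmemq1 hmemqs1 hagree1
        refine ⟨qf', ?_⟩
        rw [List.filter_cons_of_pos (by simpa using ⟨s, hbs', hc⟩)]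
        exact pqReach.cons hstep' hf
      · -- dropped: s is incomparable, in particular ¬ s ≤ p
        have hsnle : ¬ s ≤ p := fun h => hcmp ⟨s, hbl, Or.inr h⟩
        have hagree1 : ∀ r, r ≤ p → qs r = q1 r := by
          intro r hr
          have hrs : r ≠ s := fun h => hsnle (h ▸ hr)
          rw [h2 r hrs, hagree r hr]
        obtain ⟨qf', hf⟩ := ih qs hsub' hmemq1 hmemqs hagree1
        refine ⟨qf', ?_⟩
        rw [List.filter_cons_of_neg (by simpa using hcmp)]
        exact hf
    | rm b =>
      obtain ⟨s, ll, hq, hq1, hoth, hemp⟩ := hstep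
      have hbq : b ∈ q s := hq ▸ List.mem_append_right _ (List.mem_singleton_self b)
      have hbl : PQOp.put b s ∈ l := hmemq s b hbq
      have hmemq1 : ∀ r a, a ∈ q1 r → PQOp.put a r ∈ l := by
        intro r a ha
        by_cases hr : r = s
        · subst hr; rw [hq1] at ha
          exact hmemq _ _ (hq ▸ List.mem_append_left _ ha)
        · exact hmemq _ _ (by rw [hoth r hr] at ha; exact ha)
      by_cases hcmp : opComparable l p (PQOp.rm b)
      · -- kept
        obtain ⟨s', hbs', hc⟩ := hcmp
        have hss' : s = s' := put_pri_unique hd hbl hbs'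
        subst hss'
        have hsp : s ≤ p := hlep b s hbl hc
        set qs1 : PQState D P := fun r => if r = s then ll else qs r with hqs1
        have hstep' : pqStep qs (PQOp.rm b) qs1 := by
          refine ⟨s, ll, ?_, by simp [hqs1], fun r hr => by simp [hqs1, hr], ?_⟩
          · rw [hagree s hsp]; exact hq
          · intro r hr
            rw [hagree r (le_of_lt (lt_of_lt_of_le hr hsp))]
            exact hemp r hr
        have hmemqs1 : ∀ r a, a ∈ qs1 r → PQOp.put a r ∈ l := by
          intro r a ha
          by_cases hr : r = s
          · subst hr; simp only [hqs1, if_pos rfl] at ha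
            exact hmemq _ _ (hq ▸ List.mem_append_left _ ha)
          · exact hmemqs _ _ (by simpa [hqs1, hr] using ha)
        have hagree1 : ∀ r, r ≤ p → qs1 r = q1 r := by
          intro r hr
          by_cases hrs : r = s
          · subst hrs; simp only [hqs1, if_pos rfl]; rw [hq1]
          · simp only [hqs1, if_neg hrs]
            rw [hoth r hrs, hagree r hr]
        obtain ⟨qf', hf⟩ := ih qs1 hsub' hmemq1 hmemqs1 hagree1
        refine ⟨qf', ?_⟩
        rw [List.filter_cons_of_pos (by simpa using ⟨s, hbs', hc⟩)]
        exact pqReach.cons hstep' hf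
      · -- dropped
        have hsnle : ¬ s ≤ p := fun h => hcmp ⟨s, hbl, Or.inr h⟩
        have hagree1 : ∀ r, r ≤ p → qs r = q1 r := by
          intro r hr
          have hrs : r ≠ s := fun h => hsnle (h ▸ hr)
          rw [hoth r hrs, hagree r hr]
        obtain ⟨qf', hf⟩ := ih qs hsub' hmemq1 hmemqs hagree1
        refine ⟨qf', ?_⟩
        rw [List.filter_cons_of_neg (by simpa using hcmp)]
        exact hf
    | rmEmpty b => exact absurd ⟨b, hopl⟩ hne

end Aux

/-- discarding, from some position onward, all operations whose value's
priority is incomparable with a maximal priority `p` preserves membership in `SeqPQ`. -/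
theorem discard_incomparable_suffix_still_seqPQ {D : Type u} {P : Type v} [PartialOrder P]
    (l : List (PQOp D P)) (hl : SeqPQ l) (hd : SeqDiff l)
    (hne : ¬ HasEmptyRemovesSeq l)
    (p : P) (hp : p ∈ prioritiesSeq l) (hmax : ∀ q ∈ prioritiesSeq l, ¬ p < q)
    (k : ℕ) :
    SeqPQ (l.take k ++ (l.drop k).filter fun op => decide (opComparable l p op)) := by
  obtain ⟨qf, hreach⟩ := hl
  rw [← List.take_append_drop k l] at hreach
  obtain ⟨q0, h1, h2⟩ := pqReach_split hreach
  have hmemq0 : ∀ r a, a ∈ q0 r → PQOp.put a r ∈ l := by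
    intro r a ha
    rcases pqReach_mem h1 r a ha with h | h
    · simp [pqInit] at h
    · exact (List.take_sublist k l).subset h
  obtain ⟨qf', hf⟩ := sim_filter l hd hne p hmax (l.drop k) q0 qf q0 h2
    (fun op h => (List.drop_sublist k l).subset h) hmemq0 hmemq0 (fun r _ => rfl)
  exact ⟨qf', pqReach_append h1 hf⟩
end
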